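/- The shuffle-type product σ ∇ τ = Σ_{π ∈ Sh(p,q)} sgn(π) (σ ⊙ τ)·π^{-1} on ⊕_n K[Σ_n], where σ ∈ Σ_p, τ ∈ Σ_q, ⊙ is concatenation, and Sh(p,q) is the set of (p,q)-shuffles acting on the right, is associative. -/

import Mathlib

/-- A word `w` (in one-line notation) is a permutation of `{1, …, w.length}`. -/
def IsPermWord (w : List ℕ) : Prop := w.Perm (List.range' 1 w.length)

/-- The concatenation product `σ ⊙ τ` of permutation words. -/
def cprodw (σ τ : List ℕ) : List ℕ := σ ++ τ.map (· + σ.length)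

/-- The inverse of a permutation word. -/
def invw (w : List ℕ) : List ℕ :=
  (List.range w.length).map (fun i => w.idxOf (i + 1) + 1)

/-- Composition of permutation words: `(ρ ∘ π)(i) = ρ(π(i))`. -/
def compw (ρ π : List ℕ) : List ℕ :=
  (List.range π.length).map (fun i => ρ.getD (π.getD i 0 - 1) 0)

/-- Number of inversions of a word. -/
def inversions (w : List ℕ) : ℕ :=
  ((Finset.range w.length ×ˢ Finset.range w.length).filter
    (fun p => p.1 < p.2 ∧ w.getD p.2 0 < w.getD p.1 0)).card

/-- The signature of a permutation word. -/
def sgnw (w : List ℕ) : ℤ := (-1) ^ (inversions w)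

/-- The set of `(p,q)`-shuffles: permutation words `π` of `{1,…,p+q}` with
`π(1) < ⋯ < π(p)` and `π(p+1) < ⋯ < π(p+q)`. -/
def shuffles (p q : ℕ) : Finset (List ℕ) :=
  ((List.range' 1 (p + q)).permutations.toFinset).filter
    (fun w => (w.take p).IsChain (· < ·) ∧ (w.drop p).IsChain (· < ·))

/-- The shuffle-type product on basis words:
`σ ∇ τ = Σ_{π ∈ Sh(p,q)} sgn(π) (σ ⊙ τ) ∘ π⁻¹`. -/
noncomputable def shufF (K : Type*) [Field K] (σ τ : List ℕ) : List ℕ →₀ K :=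
  ∑ π ∈ shuffles σ.length τ.length,
    sgnw π • Finsupp.single (compw (cprodw σ τ) (invw π)) (1 : K)

/-- The bilinear extension of `∇` to the free `K`-vector space on words. -/
noncomputable def shufL (K : Type*) [Field K] :
    (List ℕ →₀ K) →ₗ[K] (List ℕ →₀ K) →ₗ[K] (List ℕ →₀ K) :=
  Finsupp.lsum K fun σ =>
    (LinearMap.id : K →ₗ[K] K).smulRight
      (Finsupp.lsum K fun τ => (LinearMap.id : K →ₗ[K] K).smulRight (shufF K σ τ))

/-!
Write `σ ⊙ τ = x ++ y`. The term of a shuffle `π` in `σ ∇ τ` is the interleaving of the words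
`x` and `y` in which the letters of `x` occupy the positions `π(1) < ⋯ < π(p)`, with sign `sgn π`.
A `(p+1, q+1)`-shuffle has the letter `1` at the head of one of its two increasing runs; removing
it (which removes `0` or `p+1` inversions) shows that this sum is the signed shuffle product of
words, `(a :: x) ⧢ (b :: y) = a · (x ⧢ (b :: y)) + (-1)^(|x|+1) b · ((a :: x) ⧢ y)`.
Both bracketings of a triple `⧢`-product satisfy the same three-term recursion on the first
letter, so they agree by induction on the total length. The shift of the letters of the right
factor in `⊙` is a relabelling of the alphabet, which commutes with `⧢`.
-/

open Finsupp List

namespace List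

lemma insertIdx_eq_take_append_cons_drop {α : Type*} (a : α) :
    ∀ (k : ℕ) (l : List α), k ≤ l.length → l.insertIdx k a = l.take k ++ a :: l.drop k
  | 0, l, _ => by simp
  | k + 1, b :: l, hk => by
    simp [insertIdx_succ_cons, insertIdx_eq_take_append_cons_drop a k l (by simpa using hk)]

lemma getD_eraseIdx {α : Type*} (l : List α) (k t : ℕ) (d : α) :
    (l.eraseIdx k).getD t d = l.getD (if t < k then t else t + 1) d := by
  simp only [getD_eq_getElem?_getD, getElem?_eraseIdx]
  split_ifs <;> rfl

lemma idxOf_map_add_one (l : List ℕ) (m : ℕ) : (l.map (· + 1)).idxOf (m + 1) = l.idxOf m := by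
  induction l with
  | nil => rfl
  | cons a l ih => by_cases h : a = m <;> simp [h, ih]

lemma map_add_one_map_sub_one {l : List ℕ} (h : 0 ∉ l) : (l.map (· - 1)).map (· + 1) = l := by
  rw [map_map]
  refine (map_congr_left fun x hx => ?_).trans (map_id l)
  have : x ≠ 0 := fun hx0 => h (hx0 ▸ hx)
  simp only [Function.comp_apply, id]
  omega

lemma isChain_lt_map_add_one {l : List ℕ} :
    (l.map (· + 1)).IsChain (· < ·) ↔ l.IsChain (· < ·) := by
  simp [isChain_map]

lemma eq_cons_tail_of_isChain_lt {l : List ℕ} {m : ℕ} (hc : l.IsChain (· < ·)) (hm : m ∈ l)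
    (hmin : ∀ x ∈ l, m ≤ x) : l = m :: l.tail := by
  obtain _ | ⟨b, t⟩ := l
  · simp at hm
  · obtain rfl | hmt := mem_cons.mp hm
    · rfl
    · have hbm : b < m := rel_of_pairwise_cons (isChain_iff_pairwise.mp hc) hmt
      have hmb := hmin b mem_cons_self
      omega

end List

section SignedShuffle

variable {α : Type*} (R : Type*) [CommRing R]

noncomputable def prependL (a : α) : (List α →₀ R) →ₗ[R] (List α →₀ R) :=
  lmapDomain R R (cons a)

@[simp]
lemma prependL_single (a : α) (w : List α) (c : R) :
    prependL R a (single w c) = single (a :: w) c :=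
  mapDomain_single

lemma prependL_mem_supported {a : α} {n : ℕ} {f : List α →₀ R}
    (hf : f ∈ supported R R {w : List α | w.length = n}) :
    prependL R a f ∈ supported R R {w : List α | w.length = n + 1} := by
  classical
  rw [mem_supported] at hf ⊢
  intro _ hw
  obtain ⟨w, hw', rfl⟩ := Finset.mem_image.mp (mapDomain_support hw)
  simpa using hf hw'

noncomputable def signedShuffle : List α → List α → (List α →₀ R)
  | [], y => single y 1
  | a :: x, [] => single (a :: x) 1
  | a :: x, b :: y => prependL R a (signedShuffle x (b :: y)) +
      (-1 : R) ^ (x.length + 1) • prependL R b (signedShuffle (a :: x) y)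

variable {R}

@[simp]
lemma signedShuffle_nil_left (y : List α) : signedShuffle R [] y = single y 1 := by
  rw [signedShuffle]

@[simp]
lemma signedShuffle_nil_right (x : List α) : signedShuffle R x [] = single x 1 := by
  cases x <;> rw [signedShuffle]

lemma signedShuffle_cons_cons (a b : α) (x y : List α) :
    signedShuffle R (a :: x) (b :: y) = prependL R a (signedShuffle R x (b :: y)) +
      (-1 : R) ^ (x.length + 1) • prependL R b (signedShuffle R (a :: x) y) := by
  rw [signedShuffle]

lemma signedShuffle_mem_supported : ∀ x y : List α,
    signedShuffle R x y ∈ supported R R {w : List α | w.length = x.length + y.length}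
  | [], y => by rw [signedShuffle_nil_left]; exact single_mem_supported R _ (by simp)
  | a :: x, [] => by rw [signedShuffle_nil_right]; exact single_mem_supported R _ (by simp)
  | a :: x, b :: y => by
    rw [signedShuffle_cons_cons]
    refine add_mem ?_ (Submodule.smul_mem _ _ ?_)
    · simpa [add_assoc, add_comm 1] using
        prependL_mem_supported R (signedShuffle_mem_supported x (b :: y))
    · simpa [add_assoc] using prependL_mem_supported R (signedShuffle_mem_supported (a :: x) y)

lemma signedShuffle_map {β : Type*} (f : α → β) : ∀ x y : List α,
    signedShuffle R (x.map f) (y.map f) = mapDomain (map f) (signedShuffle R x y)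
  | [], y => by simp
  | a :: x, [] => by simp
  | a :: x, b :: y => by
    have hcons : ∀ (c : α) (g : List α →₀ R),
        mapDomain (map f) (prependL R c g) = prependL R (f c) (mapDomain (map f) g) := by
      intro c g
      simp only [prependL, lmapDomain_apply, ← mapDomain_comp]
      rfl
    simp only [map_cons, signedShuffle_cons_cons, length_map, mapDomain_add, mapDomain_smul,
      hcons, ← signedShuffle_map f x (b :: y), ← signedShuffle_map f (a :: x) y, map_cons]

variable (R) in
noncomputable def shuffleL : (List α →₀ R) →ₗ[R] (List α →₀ R) →ₗ[R] (List α →₀ R) :=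
  lsum R fun x =>
    LinearMap.id.smulRight (lsum R fun y => LinearMap.id.smulRight (signedShuffle R x y))

@[simp]
lemma shuffleL_single_single (x y : List α) (c d : R) :
    shuffleL R (single x c) (single y d) = (c * d) • signedShuffle R x y := by
  simp [shuffleL, mul_smul, smul_comm c d]

lemma shuffleL_single_nil_left (g : List α →₀ R) : shuffleL R (single [] 1) g = g := by
  induction g using Finsupp.induction_linear with
  | zero => simp
  | add f g hf hg => rw [map_add, hf, hg]
  | single w c => simp

lemma shuffleL_single_nil_right (f : List α →₀ R) : shuffleL R f (single [] 1) = f := by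
  induction f using Finsupp.induction_linear with
  | zero => simp
  | add f g hf hg => rw [map_add, LinearMap.add_apply, hf, hg]
  | single w c => simp

lemma shuffleL_prependL_single_cons (a c : α) (z : List α) {n : ℕ} {f : List α →₀ R}
    (hf : f ∈ supported R R {w : List α | w.length = n}) :
    shuffleL R (prependL R a f) (single (c :: z) 1) =
      prependL R a (shuffleL R f (single (c :: z) 1)) +
        (-1 : R) ^ (n + 1) • prependL R c (shuffleL R (prependL R a f) (single z 1)) := by
  rw [supported_eq_span_single] at hf
  induction hf using Submodule.span_induction with
  | mem _ hw =>
    obtain ⟨w, rfl, rfl⟩ := hw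
    simp [signedShuffle_cons_cons]
  | zero => simp
  | add f g _ _ hf hg => simp only [map_add, LinearMap.add_apply, hf, hg, smul_add]; abel
  | smul d f _ hf => simp only [map_smul, LinearMap.smul_apply, hf, smul_add, smul_comm d]

lemma shuffleL_single_cons_prependL (a b : α) (x : List α) (g : List α →₀ R) :
    shuffleL R (single (a :: x) 1) (prependL R b g) =
      prependL R a (shuffleL R (single x 1) (prependL R b g)) +
        (-1 : R) ^ (x.length + 1) • prependL R b (shuffleL R (single (a :: x) 1) g) := by
  induction g using Finsupp.induction_linear with
  | zero => simp
  | add f g hf hg => simp only [map_add, hf, hg, smul_add]; abel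
  | single w c => simp [signedShuffle_cons_cons, smul_comm c]

lemma shuffleL_signedShuffle_cons_single_cons (a b c : α) (x y z : List α) :
    shuffleL R (signedShuffle R (a :: x) (b :: y)) (single (c :: z) 1) =
      prependL R a (shuffleL R (signedShuffle R x (b :: y)) (single (c :: z) 1)) +
      (-1 : R) ^ (x.length + 1) •
        prependL R b (shuffleL R (signedShuffle R (a :: x) y) (single (c :: z) 1)) +
      ((-1 : R) ^ (x.length + 1) * (-1 : R) ^ (y.length + 1)) •
        prependL R c (shuffleL R (signedShuffle R (a :: x) (b :: y)) (single z 1)) := by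
  have hsign : (-1 : R) ^ (x.length + y.length + 1 + 1) =
      (-1 : R) ^ (x.length + 1) * (-1 : R) ^ (y.length + 1) := by
    ring
  have h₁ := signedShuffle_mem_supported (R := R) x (b :: y)
  have h₂ := signedShuffle_mem_supported (R := R) (a :: x) y
  simp only [length_cons, ← add_assoc, add_right_comm _ 1 y.length] at h₁ h₂
  simp only [signedShuffle_cons_cons a b, map_add, map_smul, LinearMap.add_apply,
    LinearMap.smul_apply, shuffleL_prependL_single_cons _ _ _ h₁,
    shuffleL_prependL_single_cons _ _ _ h₂, hsign]
  module

lemma shuffleL_single_cons_signedShuffle_cons (a b c : α) (x y z : List α) :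
    shuffleL R (single (a :: x) 1) (signedShuffle R (b :: y) (c :: z)) =
      prependL R a (shuffleL R (single x 1) (signedShuffle R (b :: y) (c :: z))) +
      (-1 : R) ^ (x.length + 1) •
        prependL R b (shuffleL R (single (a :: x) 1) (signedShuffle R y (c :: z))) +
      ((-1 : R) ^ (x.length + 1) * (-1 : R) ^ (y.length + 1)) •
        prependL R c (shuffleL R (single (a :: x) 1) (signedShuffle R (b :: y) z)) := by
  simp only [signedShuffle_cons_cons b c, map_add, map_smul, shuffleL_single_cons_prependL]
  module

lemma shuffleL_signedShuffle_single : ∀ x y z : List α,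
    shuffleL R (signedShuffle R x y) (single z 1) = shuffleL R (single x 1) (signedShuffle R y z)
  | [], y, z => by simp [shuffleL_single_nil_left]
  | a :: x, [], z => by simp
  | a :: x, b :: y, [] => by simp [shuffleL_single_nil_right]
  | a :: x, b :: y, c :: z => by
    rw [shuffleL_signedShuffle_cons_single_cons, shuffleL_single_cons_signedShuffle_cons,
      shuffleL_signedShuffle_single x (b :: y) (c :: z),
      shuffleL_signedShuffle_single (a :: x) y (c :: z),
      shuffleL_signedShuffle_single (a :: x) (b :: y) z]
termination_by x y z => x.length + y.length + z.length

theorem shuffleL_assoc (f g h : List α →₀ R) :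
    shuffleL R (shuffleL R f g) h = shuffleL R f (shuffleL R g h) := by
  induction f using Finsupp.induction_linear with
  | zero => simp
  | add f₁ f₂ h₁ h₂ => simp only [map_add, LinearMap.add_apply, h₁, h₂]
  | single x c =>
    induction g using Finsupp.induction_linear with
    | zero => simp
    | add g₁ g₂ h₁ h₂ => simp only [map_add, LinearMap.add_apply, h₁, h₂]
    | single y d =>
      induction h using Finsupp.induction_linear with
      | zero => simp
      | add h₁ h₂ e₁ e₂ => simp only [map_add, e₁, e₂]
      | single z e =>
        rw [← smul_single_one x c, ← smul_single_one y d, ← smul_single_one z e]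
        simp only [map_smul, LinearMap.smul_apply, shuffleL_single_single, one_mul, one_smul,
          shuffleL_signedShuffle_single]

end SignedShuffle

def insertOne (k : ℕ) (π : List ℕ) : List ℕ := (π.map (· + 1)).insertIdx k 1

lemma insertOne_zero (π : List ℕ) : insertOne 0 π = 1 :: π.map (· + 1) := insertIdx_zero

lemma insertOne_succ_cons (k a : ℕ) (π : List ℕ) :
    insertOne (k + 1) (a :: π) = (a + 1) :: insertOne k π := insertIdx_succ_cons

lemma length_insertOne {k : ℕ} {π : List ℕ} (hk : k ≤ π.length) :
    (insertOne k π).length = π.length + 1 := by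
  simp [insertOne, length_insertIdx, hk]

lemma idxOf_one_insertOne {π : List ℕ} (h0 : 0 ∉ π) :
    ∀ {k : ℕ}, k ≤ π.length → (insertOne k π).idxOf 1 = k := by
  induction π with
  | nil =>
    intro k hk
    obtain rfl : k = 0 := by simpa using hk
    simp [insertOne_zero]
  | cons a π ih =>
    have ha : a ≠ 0 := fun h => h0 (h ▸ mem_cons_self)
    rintro (_ | k) hk
    · simp [insertOne_zero]
    · rw [insertOne_succ_cons, idxOf_cons_ne _ (by omega), ih (fun h => h0 (mem_cons_of_mem a h))
        (by simpa using hk)]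

lemma idxOf_add_two_insertOne (j : ℕ) {π : List ℕ} :
    ∀ {k : ℕ}, k ≤ π.length → (insertOne k π).idxOf (j + 2) =
      if π.idxOf (j + 1) < k then π.idxOf (j + 1) else π.idxOf (j + 1) + 1 := by
  induction π with
  | nil =>
    intro k hk
    obtain rfl : k = 0 := by simpa using hk
    simp [insertOne_zero]
  | cons a π ih =>
    rintro (_ | k) hk
    · simpa [insertOne_zero, idxOf_cons_ne _ (show 1 ≠ j + 2 by omega)] using
        idxOf_map_add_one (a :: π) (j + 1)
    · rw [insertOne_succ_cons]
      by_cases ha : a = j + 1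
      · simp [ha]
      · rw [idxOf_cons_ne _ (by omega), idxOf_cons_ne _ ha, ih (by simpa using hk)]
        split_ifs <;> omega

lemma compw_invw (ρ π : List ℕ) :
    compw ρ (invw π) = (range π.length).map fun i => ρ.getD (π.idxOf (i + 1)) 0 := by
  simp only [compw, invw, length_map, length_range]
  refine map_congr_left fun i hi => ?_
  rw [mem_range] at hi
  simp [hi]

lemma compw_invw_insertOne (w : List ℕ) {k : ℕ} {π : List ℕ} (hk : k ≤ π.length) (h0 : 0 ∉ π) :
    compw w (invw (insertOne k π)) = w.getD k 0 :: compw (w.eraseIdx k) (invw π) := by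
  rw [compw_invw, compw_invw, length_insertOne hk, range_succ_eq_map, map_cons, map_map]
  congr 1
  · rw [idxOf_one_insertOne h0 hk]
  · refine map_congr_left fun j _ => ?_
    simp only [Function.comp_apply, getD_eraseIdx]
    rw [idxOf_add_two_insertOne j hk]

lemma sum_range_ite_getD_lt_eq_countP (l : List ℕ) (a : ℕ) :
    ∑ j ∈ Finset.range l.length, (if l.getD j 0 < a then 1 else 0) = l.countP (· < a) := by
  induction l with
  | nil => rfl
  | cons b l ih =>
    rw [length_cons, Finset.sum_range_succ']
    simp only [getD_cons_succ, getD_cons_zero, ih, countP_cons]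
    by_cases h : b < a <;> simp [h]

lemma inversions_cons (a : ℕ) (l : List ℕ) :
    inversions (a :: l) = l.countP (· < a) + inversions l := by
  simp only [inversions, Finset.card_filter, Finset.sum_product, length_cons,
    Finset.sum_range_succ', getD_cons_succ, getD_cons_zero]
  simp [← sum_range_ite_getD_lt_eq_countP, add_comm]

lemma inversions_map_add_one (π : List ℕ) : inversions (π.map (· + 1)) = inversions π := by
  induction π with
  | nil => rfl
  | cons a π ih => simp [inversions_cons, countP_map, ih, Function.comp_def]

lemma inversions_insertOne {π : List ℕ} (h0 : 0 ∉ π) :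
    ∀ {k : ℕ}, k ≤ π.length → inversions (insertOne k π) = inversions π + k := by
  induction π with
  | nil =>
    intro k hk
    obtain rfl : k = 0 := by simpa using hk
    rfl
  | cons a π ih =>
    have ha : a ≠ 0 := fun h => h0 (h ▸ mem_cons_self)
    have h0' : 0 ∉ π := fun h => h0 (mem_cons_of_mem a h)
    rintro (_ | k) hk
    · rw [insertOne_zero, inversions_cons, inversions_map_add_one, add_zero,
        countP_eq_zero.mpr (by simp), zero_add]
    · have hk' : k ≤ π.length := by simpa using hk
      have hcount : (insertOne k π).countP (· < a + 1) = π.countP (· < a) + 1 := by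
        rw [insertOne, (perm_insertIdx 1 _ (by simpa using hk')).countP_eq, countP_cons,
          countP_map]
        simp [Function.comp_def, Nat.pos_of_ne_zero ha]
      rw [insertOne_succ_cons, inversions_cons, inversions_cons, hcount, ih h0' hk']
      ring

lemma sgnw_insertOne {k : ℕ} {π : List ℕ} (hk : k ≤ π.length) (h0 : 0 ∉ π) :
    sgnw (insertOne k π) = (-1) ^ k * sgnw π := by
  rw [sgnw, sgnw, inversions_insertOne h0 hk, pow_add, mul_comm]

lemma range'_one_succ (n : ℕ) : range' 1 (n + 1) = insertOne 0 (range' 1 n) := by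
  rw [insertOne_zero, ← range'_succ_left, range'_succ]

lemma sgnw_range'_one (n : ℕ) : sgnw (range' 1 n) = 1 := by
  induction n with
  | zero => rfl
  | succ n ih => rw [range'_one_succ, sgnw_insertOne (by simp) (by simp), ih, pow_zero, one_mul]

lemma compw_invw_range'_one (w : List ℕ) : compw w (invw (range' 1 w.length)) = w := by
  induction w with
  | nil => rfl
  | cons a w ih =>
    rw [length_cons, range'_one_succ, compw_invw_insertOne _ (by simp) (by simp)]
    simpa using ih

lemma mem_shuffles {p q : ℕ} {π : List ℕ} :
    π ∈ shuffles p q ↔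
      π ~ range' 1 (p + q) ∧ (π.take p).IsChain (· < ·) ∧ (π.drop p).IsChain (· < ·) := by
  simp [shuffles, mem_permutations]

lemma length_of_mem_shuffles {p q : ℕ} {π : List ℕ} (h : π ∈ shuffles p q) :
    π.length = p + q := by
  simpa using (mem_shuffles.mp h).1.length_eq

lemma zero_notMem_of_mem_shuffles {p q : ℕ} {π : List ℕ} (h : π ∈ shuffles p q) : 0 ∉ π := by
  rw [(mem_shuffles.mp h).1.mem_iff]
  simp

lemma eq_range'_of_perm_of_isChain {n : ℕ} {π : List ℕ} (h : π ~ range' 1 n)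
    (hc : π.IsChain (· < ·)) : π = range' 1 n :=
  h.eq_of_pairwise (fun _ _ _ _ hab hba => absurd hab (lt_asymm hba))
    (isChain_iff_pairwise.mp hc) pairwise_lt_range'

lemma shuffles_zero_left (q : ℕ) : shuffles 0 q = {range' 1 q} := by
  ext π
  rw [mem_shuffles, Finset.mem_singleton, zero_add, take_zero, drop_zero]
  refine ⟨fun ⟨h, _, hc⟩ => eq_range'_of_perm_of_isChain h hc, ?_⟩
  rintro rfl
  exact ⟨Perm.refl _, isChain_nil, isChain_iff_pairwise.mpr pairwise_lt_range'⟩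

lemma shuffles_zero_right (p : ℕ) : shuffles p 0 = {range' 1 p} := by
  ext π
  rw [mem_shuffles, Finset.mem_singleton, add_zero]
  constructor
  · rintro ⟨h, hc, _⟩
    rw [take_of_length_le (by simp [h.length_eq])] at hc
    exact eq_range'_of_perm_of_isChain h hc
  · rintro rfl
    simpa using isChain_iff_pairwise.mpr pairwise_lt_range'

lemma insertOne_perm_range'_iff {k n : ℕ} {π : List ℕ} (hk : k ≤ π.length) :
    insertOne k π ~ range' 1 (n + 1) ↔ π ~ range' 1 n := by
  have hins : insertOne k π ~ 1 :: π.map (· + 1) := perm_insertIdx 1 _ (by simpa using hk)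
  rw [hins.congr_left, range'_one_succ, insertOne_zero, perm_cons,
    map_perm_map_iff (add_left_injective 1)]

lemma insertOne_zero_mem_shuffles_iff {p q : ℕ} {π : List ℕ} :
    insertOne 0 π ∈ shuffles (p + 1) q ↔ π ∈ shuffles p q := by
  rw [mem_shuffles, mem_shuffles, add_right_comm, insertOne_perm_range'_iff (Nat.zero_le _),
    insertOne_zero, take_succ_cons, drop_succ_cons, ← map_take, ← map_drop,
    isChain_lt_map_add_one, isChain_cons, isChain_lt_map_add_one]
  constructor
  · rintro ⟨h, ⟨-, hc⟩, hc'⟩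
    exact ⟨h, hc, hc'⟩
  · rintro ⟨h, hc, hc'⟩
    refine ⟨h, ⟨fun y hy => ?_, hc⟩, hc'⟩
    obtain ⟨x, hx, rfl⟩ := mem_map.mp (mem_of_mem_head? hy)
    have : x ≠ 0 := fun hx0 => (zero_notMem_of_mem_shuffles (mem_shuffles.mpr ⟨h, hc, hc'⟩))
      (hx0 ▸ mem_of_mem_take hx)
    omega

lemma insertOne_mem_shuffles_iff {p q : ℕ} {π : List ℕ} (hπ : p + 1 ≤ π.length) :
    insertOne (p + 1) π ∈ shuffles (p + 1) (q + 1) ↔ π ∈ shuffles (p + 1) q := by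
  have hπ' : p + 1 ≤ (π.map (· + 1)).length := by simpa using hπ
  have htake : ((π.map (· + 1)).take (p + 1)).length = p + 1 := by simpa using hπ'
  rw [mem_shuffles, mem_shuffles, ← add_assoc, insertOne_perm_range'_iff hπ, insertOne,
    insertIdx_eq_take_append_cons_drop _ _ _ hπ', take_left' htake, drop_left' htake,
    ← map_take, ← map_drop, isChain_lt_map_add_one, isChain_cons, isChain_lt_map_add_one]
  constructor
  · rintro ⟨h, hc, -, hc'⟩
    exact ⟨h, hc, hc'⟩
  · rintro ⟨h, hc, hc'⟩
    refine ⟨h, hc, fun y hy => ?_, hc'⟩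
    obtain ⟨x, hx, rfl⟩ := mem_map.mp (mem_of_mem_head? hy)
    have : x ≠ 0 := fun hx0 => (zero_notMem_of_mem_shuffles (mem_shuffles.mpr ⟨h, hc, hc'⟩))
      (hx0 ▸ mem_of_mem_drop hx)
    omega

lemma exists_insertOne_eq_of_mem_shuffles {p q : ℕ} {ρ : List ℕ}
    (hρ : ρ ∈ shuffles (p + 1) (q + 1)) :
    (∃ π ∈ shuffles p (q + 1), insertOne 0 π = ρ) ∨
      ∃ π ∈ shuffles (p + 1) q, insertOne (p + 1) π = ρ := by
  obtain ⟨hperm, hc₁, hc₂⟩ := mem_shuffles.mp hρ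
  have hlen : ρ.length = p + 1 + (q + 1) := by simpa using hperm.length_eq
  have hpos : ∀ x ∈ ρ, 1 ≤ x := fun x hx => (mem_range'_1.mp (hperm.mem_iff.mp hx)).1
  have hρ0 : ∀ {l : List ℕ}, l ⊆ ρ → 0 ∉ l := fun hl h0 => absurd (hpos 0 (hl h0)) (by omega)
  have h1 : 1 ∈ ρ.take (p + 1) ++ ρ.drop (p + 1) := by
    rw [take_append_drop, hperm.mem_iff]
    simp
  rcases mem_append.mp h1 with h1 | h1
  · left
    have hhead := eq_cons_tail_of_isChain_lt hc₁ h1 fun x hx => hpos x (mem_of_mem_take hx)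
    set rest := (ρ.take (p + 1)).tail ++ ρ.drop (p + 1)
    have hins : insertOne 0 (rest.map (· - 1)) = ρ := by
      rw [insertOne_zero, map_add_one_map_sub_one, ← cons_append, ← hhead, take_append_drop]
      refine hρ0 fun x hx => ?_
      rcases mem_append.mp hx with hx | hx
      exacts [mem_of_mem_take (mem_of_mem_tail hx), mem_of_mem_drop hx]
    exact ⟨_, insertOne_zero_mem_shuffles_iff.mp (hins ▸ hρ), hins⟩
  · right
    have hhead := eq_cons_tail_of_isChain_lt hc₂ h1 fun x hx => hpos x (mem_of_mem_drop hx)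
    set rest := ρ.take (p + 1) ++ (ρ.drop (p + 1)).tail
    have htake : (ρ.take (p + 1)).length = p + 1 := by simp [hlen]
    have hrest : p + 1 ≤ (rest.map (· - 1)).length := by simp [rest, hlen]
    have hins : insertOne (p + 1) (rest.map (· - 1)) = ρ := by
      rw [insertOne, map_add_one_map_sub_one,
        insertIdx_eq_take_append_cons_drop _ _ _ (by simpa using hrest), take_left' htake,
        drop_left' htake, ← hhead, take_append_drop]
      refine hρ0 fun x hx => ?_
      rcases mem_append.mp hx with hx | hx
      exacts [mem_of_mem_take hx, mem_of_mem_drop (mem_of_mem_tail hx)]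
    exact ⟨_, (insertOne_mem_shuffles_iff hrest).mp (hins ▸ hρ), hins⟩

lemma shuffles_succ_succ (p q : ℕ) :
    shuffles (p + 1) (q + 1) =
      (shuffles p (q + 1)).image (insertOne 0) ∪
        (shuffles (p + 1) q).image (insertOne (p + 1)) := by
  ext ρ
  simp only [Finset.mem_union, Finset.mem_image]
  refine ⟨exists_insertOne_eq_of_mem_shuffles, ?_⟩
  rintro (⟨π, hπ, rfl⟩ | ⟨π, hπ, rfl⟩)
  · exact insertOne_zero_mem_shuffles_iff.mpr hπ
  · exact (insertOne_mem_shuffles_iff (by simp [length_of_mem_shuffles hπ])).mpr hπ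

lemma insertOne_injective (k : ℕ) : Function.Injective (insertOne k) :=
  (insertIdx_injective k 1).comp (map_injective_iff.mpr (add_left_injective 1))

lemma sum_shuffles_succ_succ {M : Type*} [AddCommMonoid M] (p q : ℕ) (F : List ℕ → M) :
    ∑ ρ ∈ shuffles (p + 1) (q + 1), F ρ =
      ∑ π ∈ shuffles p (q + 1), F (insertOne 0 π) +
        ∑ π ∈ shuffles (p + 1) q, F (insertOne (p + 1) π) := by
  have hdisj : Disjoint ((shuffles p (q + 1)).image (insertOne 0))
      ((shuffles (p + 1) q).image (insertOne (p + 1))) := by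
    simp only [Finset.disjoint_left, Finset.mem_image]
    rintro _ ⟨π, hπ, rfl⟩ ⟨π', hπ', heq⟩
    have h := congrArg (List.idxOf 1) heq
    rw [idxOf_one_insertOne (zero_notMem_of_mem_shuffles hπ) (Nat.zero_le _),
      idxOf_one_insertOne (zero_notMem_of_mem_shuffles hπ')
        (by simp [length_of_mem_shuffles hπ'])] at h
    omega
  rw [shuffles_succ_succ, Finset.sum_union hdisj,
    Finset.sum_image fun _ _ _ _ h => insertOne_injective 0 h,
    Finset.sum_image fun _ _ _ _ h => insertOne_injective (p + 1) h]

noncomputable def shuffleSum (R : Type*) [CommRing R] (x y : List ℕ) : List ℕ →₀ R :=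
  ∑ π ∈ shuffles x.length y.length, sgnw π • single (compw (x ++ y) (invw π)) (1 : R)

section ShuffleSum

variable {R : Type*} [CommRing R]

lemma shuffleSum_nil_left (y : List ℕ) : shuffleSum R [] y = single y 1 := by
  simp [shuffleSum, shuffles_zero_left, sgnw_range'_one, compw_invw_range'_one]

lemma shuffleSum_nil_right (x : List ℕ) : shuffleSum R x [] = single x 1 := by
  simp [shuffleSum, shuffles_zero_right, sgnw_range'_one, compw_invw_range'_one]

lemma shuffleSum_cons_cons (a b : ℕ) (x y : List ℕ) :
    shuffleSum R (a :: x) (b :: y) = prependL R a (shuffleSum R x (b :: y)) +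
      (-1 : R) ^ (x.length + 1) • prependL R b (shuffleSum R (a :: x) y) := by
  rw [shuffleSum, length_cons, length_cons, sum_shuffles_succ_succ]
  congr 1
  · rw [shuffleSum, map_sum]
    refine Finset.sum_congr rfl fun π hπ => ?_
    have h0 := zero_notMem_of_mem_shuffles hπ
    rw [sgnw_insertOne (Nat.zero_le _) h0, compw_invw_insertOne _ (Nat.zero_le _) h0, map_zsmul,
      prependL_single]
    simp
  · rw [shuffleSum, map_sum, Finset.smul_sum]
    refine Finset.sum_congr rfl fun π hπ => ?_
    have h0 := zero_notMem_of_mem_shuffles hπ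
    have hk : x.length + 1 ≤ π.length := by simp [length_of_mem_shuffles hπ]
    rw [sgnw_insertOne hk h0, compw_invw_insertOne _ hk h0, map_zsmul, prependL_single,
      mul_smul, ← Int.cast_smul_eq_zsmul R ((-1) ^ _)]
    push_cast
    simp [eraseIdx_append_of_length_le]

lemma shuffleSum_eq_signedShuffle : ∀ x y : List ℕ, shuffleSum R x y = signedShuffle R x y
  | [], y => by rw [shuffleSum_nil_left, signedShuffle_nil_left]
  | a :: x, [] => by rw [shuffleSum_nil_right, signedShuffle_nil_right]
  | a :: x, b :: y => by
    rw [shuffleSum_cons_cons, signedShuffle_cons_cons, shuffleSum_eq_signedShuffle x,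
      shuffleSum_eq_signedShuffle (a :: x) y]

end ShuffleSum

section ShufL

variable {K : Type*} [Field K]

lemma shufF_eq_signedShuffle (σ τ : List ℕ) :
    shufF K σ τ = signedShuffle K σ (τ.map (· + σ.length)) := by
  rw [← shuffleSum_eq_signedShuffle]
  simp [shufF, shuffleSum, cprodw]

lemma shufL_single_single (σ τ : List ℕ) (c d : K) :
    shufL K (single σ c) (single τ d) = (c * d) • shufF K σ τ := by
  simp [shufL, mul_smul, smul_comm c d]

lemma shufL_single_left (σ : List ℕ) (g : List ℕ →₀ K) :
    shufL K (single σ 1) g = shuffleL K (single σ 1) (mapDomain (map (· + σ.length)) g) := by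
  induction g using Finsupp.induction_linear with
  | zero => simp
  | add f g hf hg => rw [map_add, hf, hg, mapDomain_add, map_add]
  | single τ c => simp [shufL_single_single, shufF_eq_signedShuffle]

lemma shufL_single_right {n : ℕ} {f : List ℕ →₀ K}
    (hf : f ∈ supported K K {w : List ℕ | w.length = n}) (ρ : List ℕ) :
    shufL K f (single ρ 1) = shuffleL K f (single (ρ.map (· + n)) 1) := by
  rw [supported_eq_span_single] at hf
  induction hf using Submodule.span_induction with
  | mem _ hw =>
    obtain ⟨w, rfl, rfl⟩ := hw
    simp [shufL_single_single, shufF_eq_signedShuffle]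
  | zero => simp
  | add f g _ _ hf hg => simp only [map_add, LinearMap.add_apply, hf, hg]
  | smul c f _ hf => simp only [map_smul, LinearMap.smul_apply, hf]

end ShufL

theorem shuffle_product_assoc_general (K : Type*) [Field K] (σ τ ρ : List ℕ) :
    shufL K (shufL K (Finsupp.single σ (1 : K)) (Finsupp.single τ 1)) (Finsupp.single ρ 1)
      = shufL K (Finsupp.single σ 1) (shufL K (Finsupp.single τ 1) (Finsupp.single ρ 1)) := by
  have hστ := signedShuffle_mem_supported (R := K) σ (τ.map (· + σ.length))
  rw [length_map] at hστ
  have hρ : (ρ.map (· + τ.length)).map (· + σ.length) = ρ.map (· + (σ.length + τ.length)) := by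
    simp only [map_map, Function.comp_def, add_assoc, add_comm τ.length]
  rw [shufL_single_single, shufL_single_single, one_mul, one_smul, one_smul,
    shufF_eq_signedShuffle, shufF_eq_signedShuffle, shufL_single_right hστ, shufL_single_left,
    ← signedShuffle_map, hρ]
  simpa using shuffleL_assoc (single σ 1) (single (τ.map (· + σ.length)) 1)
    (single (ρ.map (· + (σ.length + τ.length))) (1 : K))

/-- the signed shuffle product `∇` on `⊕_n K[Σ_n]` is associative
(checked on basis elements, i.e. permutation words). -/
theorem shuffle_product_assoc (K : Type*) [Field K] (σ τ ρ : List ℕ)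
    (hσ : IsPermWord σ) (hτ : IsPermWord τ) (hρ : IsPermWord ρ) :
    shufL K (shufL K (Finsupp.single σ (1 : K)) (Finsupp.single τ 1)) (Finsupp.single ρ 1)
      = shufL K (Finsupp.single σ 1) (shufL K (Finsupp.single τ 1) (Finsupp.single ρ 1)) :=
  shuffle_product_assoc_general K σ τ ρ
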